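/- arXiv:1903.05756 — 6 statements merged into one kernel-verified Lean document; each statement's English description precedes it below -/
import Mathlib

section
/- Under SIC decoding user 1 first in an L-user uplink NOMA cluster, the minimum powers satisfying all rate constraints with equality are P_l^min = 2^{Σ_{k=l+1}^L R_k^min}(2^{R_l^min} − 1)σ²/|h_l|² for each l; i.e., if each user k > l transmits at P_k^min, then P_l = P_l^min achieves R_l = R_l^min exactly. The constraint set is nonempty if and only if P_l^max ≥ P_l^min for all l. -/
/-!
With every user above `l` at its minimal power, the interference-plus-noise `I_l + σ²` seen by
user `l` telescopes to `2 ^ (∑_{k > l} Rmin k) * σ²`, so that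
`P_l^min * g_l = (2 ^ Rmin l - 1) * (I_l + σ²)`: user `l` meets its rate target exactly.
Conversely, the rate constraint reads `(2 ^ Rmin l - 1) * (I_l + σ²) ≤ P_l * g_l`, and since
interference only comes from users above `l`, downward induction on `l` shows that every
feasible power vector dominates `P^min`.
-/

open Finset

theorem Nat.forall_lt_of_forall_Ioo_imp {L : ℕ} {Q : ℕ → Prop}
    (step : ∀ k < L, (∀ j ∈ Ioo k L, Q j) → Q k) : ∀ k < L, Q k := by
  suffices ∀ m ≤ L, ∀ j ∈ Ico m L, Q j from
    fun k hk => this 0 L.zero_le k (mem_Ico.mpr ⟨k.zero_le, hk⟩)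
  intro m hm
  induction hm using Nat.decreasingInduction with
  | self => simp
  | of_succ k hk ih =>
    intro j hj
    rcases (mem_Ico.mp hj).1.eq_or_lt with rfl | hkj
    · exact step k hk (by rwa [← Ico_add_one_left_eq_Ioo])
    · exact ih j (mem_Ico.mpr ⟨hkj, (mem_Ico.mp hj).2⟩)

theorem Real.sum_Ico_rpow_mul_rpow_sub_one_add_one {b : ℝ} (hb : 0 < b) (x : ℕ → ℝ)
    (m L : ℕ) :
    ∑ k ∈ Ico m L, b ^ (∑ j ∈ Ico (k + 1) L, x j) * (b ^ x k - 1) + 1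
      = b ^ ∑ k ∈ Ico m L, x k := by
  rcases le_or_gt m L with hm | hLm
  · induction hm using Nat.decreasingInduction with
    | self => simp
    | of_succ k hk ih =>
      rw [sum_eq_sum_Ico_succ_bot hk, sum_eq_sum_Ico_succ_bot hk, add_assoc, ih,
        Real.rpow_add hb]
      ring
  · simp [Ico_eq_empty_of_le hLm.le]

theorem Real.sum_Ioo_rpow_mul_rpow_sub_one_add_one {b : ℝ} (hb : 0 < b) (x : ℕ → ℝ)
    (l L : ℕ) :
    ∑ k ∈ Ioo l L, b ^ (∑ j ∈ Ioo k L, x j) * (b ^ x k - 1) + 1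
      = b ^ ∑ k ∈ Ioo l L, x k := by
  simpa only [Ico_add_one_left_eq_Ioo] using sum_Ico_rpow_mul_rpow_sub_one_add_one hb x (l + 1) L

theorem Real.le_logb_one_add_div_iff {b r s a : ℝ} (hb : 1 < b) (hs : 0 ≤ s) (ha : 0 < a) :
    r ≤ Real.logb b (1 + s / a) ↔ (b ^ r - 1) * a ≤ s := by
  rw [Real.le_logb_iff_rpow_le hb (by positivity), ← sub_le_iff_le_add', le_div_iff₀ ha]

namespace SIC

variable (L : ℕ) (g : ℕ → ℝ) (σ2 : ℝ)

noncomputable def rate (P : ℕ → ℝ) (l : ℕ) : ℝ :=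
  Real.logb 2 (1 + P l * g l / ((∑ k ∈ Ioo l L, P k * g k) + σ2))

noncomputable def minPower (Rmin : ℕ → ℝ) (l : ℕ) : ℝ :=
  2 ^ (∑ k ∈ Ioo l L, Rmin k) * (2 ^ Rmin l - 1) * σ2 / g l

variable {L g σ2} {Rmin : ℕ → ℝ}

theorem sum_Ioo_minPower_mul_add (hg : ∀ k < L, g k ≠ 0) (l : ℕ) :
    (∑ k ∈ Ioo l L, minPower L g σ2 Rmin k * g k) + σ2
      = 2 ^ (∑ k ∈ Ioo l L, Rmin k) * σ2 := by
  have hterm : ∀ k ∈ Ioo l L, minPower L g σ2 Rmin k * g k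
      = (2 ^ (∑ j ∈ Ioo k L, Rmin j) * (2 ^ Rmin k - 1)) * σ2 :=
    fun k hk => div_mul_cancel₀ _ (hg k (mem_Ioo.mp hk).2)
  rw [sum_congr rfl hterm, ← sum_mul, ← Real.sum_Ioo_rpow_mul_rpow_sub_one_add_one two_pos]
  ring

theorem minPower_mul_eq (hg : ∀ k < L, g k ≠ 0) {l : ℕ} (hl : l < L) :
    minPower L g σ2 Rmin l * g l
      = (2 ^ Rmin l - 1) * ((∑ k ∈ Ioo l L, minPower L g σ2 Rmin k * g k) + σ2) := by
  rw [sum_Ioo_minPower_mul_add hg, minPower, div_mul_cancel₀ _ (hg l hl)]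
  ring

theorem rate_minPower (hg : ∀ k < L, g k ≠ 0) (hσ : σ2 ≠ 0) {l : ℕ} (hl : l < L) :
    rate L g σ2 (minPower L g σ2 Rmin) l = Rmin l := by
  have hI : (∑ k ∈ Ioo l L, minPower L g σ2 Rmin k * g k) + σ2 ≠ 0 := by
    rw [sum_Ioo_minPower_mul_add hg]
    exact mul_ne_zero (Real.rpow_pos_of_pos two_pos _).ne' hσ
  rw [rate, minPower_mul_eq hg hl, mul_div_cancel_right₀ _ hI, add_sub_cancel,
    Real.logb_rpow two_pos (by norm_num)]

theorem minPower_nonneg {l : ℕ} (hg : 0 ≤ g l) (hσ : 0 ≤ σ2) (hR : 0 ≤ Rmin l) :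
    0 ≤ minPower L g σ2 Rmin l := by
  have : 0 ≤ (2 : ℝ) ^ Rmin l - 1 := sub_nonneg.mpr (Real.one_le_rpow one_le_two hR)
  unfold minPower
  positivity

theorem minPower_le_of_le_rate (hg : ∀ k < L, 0 < g k) (hσ : 0 < σ2)
    (hR : ∀ k < L, 0 ≤ Rmin k) {P : ℕ → ℝ}
    (hP : ∀ k < L, 0 ≤ P k ∧ Rmin k ≤ rate L g σ2 P k) :
    ∀ l < L, minPower L g σ2 Rmin l ≤ P l := by
  refine Nat.forall_lt_of_forall_Ioo_imp fun l hl ih => ?_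
  have hIoo : ∀ k ∈ Ioo l L, k < L := fun k hk => (mem_Ioo.mp hk).2
  have hinterf : (∑ k ∈ Ioo l L, minPower L g σ2 Rmin k * g k)
      ≤ ∑ k ∈ Ioo l L, P k * g k :=
    sum_le_sum fun k hk => mul_le_mul_of_nonneg_right (ih k hk) (hg k (hIoo k hk)).le
  have hPnonneg : 0 ≤ ∑ k ∈ Ioo l L, P k * g k :=
    sum_nonneg fun k hk => mul_nonneg (hP k (hIoo k hk)).1 (hg k (hIoo k hk)).le
  have hrate : (2 ^ Rmin l - 1) * ((∑ k ∈ Ioo l L, P k * g k) + σ2) ≤ P l * g l :=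
    (Real.le_logb_one_add_div_iff one_lt_two (mul_nonneg (hP l hl).1 (hg l hl).le)
      (by positivity)).mp (hP l hl).2
  have h2R : 0 ≤ (2 : ℝ) ^ Rmin l - 1 := sub_nonneg.mpr (Real.one_le_rpow one_le_two (hR l hl))
  refine le_of_mul_le_mul_right ?_ (hg l hl)
  calc minPower L g σ2 Rmin l * g l
      = (2 ^ Rmin l - 1) * ((∑ k ∈ Ioo l L, minPower L g σ2 Rmin k * g k) + σ2) :=
        minPower_mul_eq (fun k hk => (hg k hk).ne') hl
    _ ≤ (2 ^ Rmin l - 1) * ((∑ k ∈ Ioo l L, P k * g k) + σ2) := by gcongr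
    _ ≤ P l * g l := hrate

end SIC

theorem min_power_characterization (L : ℕ) (g Rmin Pmax : ℕ → ℝ) (σ2 : ℝ)
    (hg : ∀ l ∈ Finset.range L, 0 < g l)
    (hR : ∀ l ∈ Finset.range L, 0 ≤ Rmin l)
    (hσ : 0 < σ2)
    (Pmin : ℕ → ℝ)
    (hPmin : ∀ l, Pmin l =
      (2:ℝ) ^ (∑ k ∈ Finset.Ioo l L, Rmin k) * ((2:ℝ) ^ (Rmin l) - 1) * σ2 / g l) :
    (∀ l ∈ Finset.range L,
      Real.logb 2 (1 + Pmin l * g l / ((∑ k ∈ Finset.Ioo l L, Pmin k * g k) + σ2))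
        = Rmin l) ∧
    ((∃ P : ℕ → ℝ, ∀ l ∈ Finset.range L,
        0 ≤ P l ∧ P l ≤ Pmax l ∧
        Rmin l ≤ Real.logb 2
          (1 + P l * g l / ((∑ k ∈ Finset.Ioo l L, P k * g k) + σ2))) ↔
      ∀ l ∈ Finset.range L, Pmin l ≤ Pmax l) := by
  obtain rfl : Pmin = SIC.minPower L g σ2 Rmin := funext hPmin
  simp only [Finset.mem_range] at hg hR ⊢
  have hrate : ∀ l < L, SIC.rate L g σ2 (SIC.minPower L g σ2 Rmin) l = Rmin l :=
    fun l hl => SIC.rate_minPower (fun k hk => (hg k hk).ne') hσ.ne' hl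
  refine ⟨hrate, fun ⟨P, hP⟩ l hl => ?_,
    fun hmax => ⟨SIC.minPower L g σ2 Rmin, fun l hl => ?_⟩⟩
  · have hfeas : ∀ k < L, 0 ≤ P k ∧ Rmin k ≤ SIC.rate L g σ2 P k :=
      fun k hk => ⟨(hP k hk).1, (hP k hk).2.2⟩
    exact (SIC.minPower_le_of_le_rate hg hσ hR hfeas l hl).trans (hP l hl).2.1
  · exact ⟨SIC.minPower_nonneg (hg l hl).le hσ.le (hR l hl), hmax l hl, (hrate l hl).ge⟩
end

section
/- If ∂η/∂P_1 ≤ 0 at the point (P_1^max, P_2^min, ..., P_L^min), where g_1 ≥ ... ≥ g_L, then ∂η/∂P_l ≤ 0 at that point for every l, and the EE maximizer over the feasible set satisfies P_l = P_l^min for all l ≠ 1 and P_1 = max(P_1^†, P_1^min), where P_1^† is the unique root of ∂η/∂P_1 = 0 with the other powers fixed to P_{-1}^min (when such a root exists in the feasible interval). -/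
/-- Downward strong induction on `Fin (L+1)`. -/
lemma fin_rev_strong_induction {L : ℕ} {C : Fin (L+1) → Prop}
    (h : ∀ l, (∀ k, l < k → C k) → C l) : ∀ l, C l := by
  suffices H : ∀ n (l : Fin (L+1)), L - l.val ≤ n → C l from
    fun l => H (L - l.val) l le_rfl
  intro n
  induction n with
  | zero =>
    intro l hl
    exact h l fun k hk => absurd (Fin.lt_def.mp hk) (by have := k.isLt; omega)
  | succ n ih =>
    intro l hl
    exact h l fun k hk => ih k (by have := Fin.lt_def.mp hk; omega)

set_option maxHeartbeats 1000000 in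
theorem low_power_saturation (L : ℕ) (g Pmax Rmin : Fin (L+1) → ℝ) (σ2 Pf : ℝ)
    (hg : ∀ l, 0 < g l) (hgmono : ∀ i j : Fin (L+1), i ≤ j → g j ≤ g i)
    (hσ : 0 < σ2) (hPf : 0 < Pf) (hR : ∀ l, 0 ≤ Rmin l)
    (η : (Fin (L+1) → ℝ) → ℝ)
    (hη : η = fun P => Real.logb 2 (1 + (∑ k, P k * g k) / σ2) / (Pf + ∑ k, P k))
    (dη : Fin (L+1) → (Fin (L+1) → ℝ) → ℝ)
    (hdη : dη = fun l P => g l / (Real.log 2 * (σ2 + ∑ k, P k * g k) * (Pf + ∑ k, P k))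
      - Real.logb 2 (1 + (∑ k, P k * g k) / σ2) / (Pf + ∑ k, P k) ^ 2)
    (Pmin : Fin (L+1) → ℝ)
    (hPmin : ∀ l, Pmin l =
      (2:ℝ) ^ (∑ k ∈ Finset.univ.filter (fun k => l < k), Rmin k) *
        ((2:ℝ) ^ (Rmin l) - 1) * σ2 / g l)
    (hfeas : ∀ l, Pmin l ≤ Pmax l)
    (Feas : Set (Fin (L+1) → ℝ))
    (hFeas : Feas = {P | ∀ l, 0 ≤ P l ∧ P l ≤ Pmax l ∧
      ((2:ℝ) ^ (Rmin l) - 1) *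
        ((∑ k ∈ Finset.univ.filter (fun k => l < k), P k * g k) + σ2) ≤ P l * g l})
    (Q : Fin (L+1) → ℝ)
    (hQ : Q = fun l => if l = 0 then Pmax 0 else Pmin l)
    (hneg : dη 0 Q ≤ 0)
    (P1d : ℝ) (hroot : dη 0 (Function.update Q 0 P1d) = 0)
    (hP1d : Pmin 0 ≤ P1d ∧ P1d ≤ Pmax 0)
    (Pstar : Fin (L+1) → ℝ)
    (hPstar : Pstar = fun l => if l = 0 then max P1d (Pmin 0) else Pmin l) :
    (∀ l, dη l Q ≤ 0) ∧ ∀ P ∈ Feas, η P ≤ η Pstar := by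
  have hln2 : 0 < Real.log 2 := Real.log_pos one_lt_two
  have h2R : ∀ l, (1:ℝ) ≤ (2:ℝ) ^ (Rmin l) := by
    intro l
    have h := Real.rpow_le_rpow_of_exponent_le (one_le_two (α := ℝ)) (hR l)
    rwa [Real.rpow_zero] at h
  have hPminNonneg : ∀ l, 0 ≤ Pmin l := by
    intro l
    rw [hPmin]
    have h1 : (0:ℝ) < (2:ℝ) ^ (∑ k ∈ Finset.univ.filter (fun k => l < k), Rmin k) :=
      Real.rpow_pos_of_pos (by norm_num) _
    have h2 := h2R l
    apply div_nonneg _ (hg l).le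
    exact mul_nonneg (mul_nonneg h1.le (by linarith)) hσ.le
  -- key identity: sum of minimum powers
  have hident : ∀ l : Fin (L+1),
      (∑ k ∈ Finset.univ.filter (fun k => l < k), Pmin k * g k) + σ2 =
        σ2 * (2:ℝ) ^ (∑ k ∈ Finset.univ.filter (fun k => l < k), Rmin k) := by
    apply fin_rev_strong_induction
    intro l IH
    by_cases hl : l.val = L
    · have hempty : Finset.univ.filter (fun k => l < k) = (∅ : Finset (Fin (L+1))) := by
        ext k
        simp only [Finset.mem_filter, Finset.mem_univ, true_and, Finset.notMem_empty,
          iff_false, Fin.lt_def, not_lt]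
        have := k.isLt; omega
      simp [hempty, Real.rpow_zero]
    · have hlv := l.isLt
      set l' : Fin (L+1) := ⟨l.val + 1, by omega⟩ with hl'def
      have hlt : l < l' := by simp [Fin.lt_def, hl'def]
      have hsplit : Finset.univ.filter (fun k => l < k) =
          insert l' (Finset.univ.filter (fun k => l' < k)) := by
        ext k
        simp only [Finset.mem_filter, Finset.mem_univ, true_and, Finset.mem_insert,
          Fin.lt_def, Fin.ext_iff, hl'def]
        have := k.isLt; omega
      have hnotmem : l' ∉ Finset.univ.filter (fun k => l' < k) := by simp
      have IH' := IH l' hlt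
      rw [hsplit, Finset.sum_insert hnotmem, Finset.sum_insert hnotmem,
        Real.rpow_add (by norm_num : (0:ℝ) < 2)]
      have hPg : Pmin l' * g l' =
          (2:ℝ) ^ (∑ k ∈ Finset.univ.filter (fun k => l' < k), Rmin k) *
            ((2:ℝ) ^ (Rmin l') - 1) * σ2 := by
        rw [hPmin l', div_mul_cancel₀ _ (hg l').ne']
      rw [hPg]
      linear_combination IH'
  -- every feasible point dominates the minimum powers
  have hminpow : ∀ P : Fin (L+1) → ℝ,
      (∀ l, 0 ≤ P l ∧ P l ≤ Pmax l ∧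
        ((2:ℝ) ^ (Rmin l) - 1) *
          ((∑ k ∈ Finset.univ.filter (fun k => l < k), P k * g k) + σ2) ≤ P l * g l) →
      ∀ l, Pmin l ≤ P l := by
    intro P hP
    apply fin_rev_strong_induction
    intro l IH
    have hcon := (hP l).2.2
    have hsum : (∑ k ∈ Finset.univ.filter (fun k => l < k), Pmin k * g k) ≤
        ∑ k ∈ Finset.univ.filter (fun k => l < k), P k * g k := by
      apply Finset.sum_le_sum
      intro k hk
      exact mul_le_mul_of_nonneg_right (IH k (Finset.mem_filter.mp hk).2) (hg k).le
    have key : Pmin l * g l ≤ P l * g l := by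
      calc Pmin l * g l
          = ((2:ℝ) ^ (Rmin l) - 1) *
            ((∑ k ∈ Finset.univ.filter (fun k => l < k), Pmin k * g k) + σ2) := by
            rw [hident l, hPmin l, div_mul_cancel₀ _ (hg l).ne']
            ring
        _ ≤ ((2:ℝ) ^ (Rmin l) - 1) *
            ((∑ k ∈ Finset.univ.filter (fun k => l < k), P k * g k) + σ2) := by
            apply mul_le_mul_of_nonneg_left (by linarith) (by linarith [h2R l])
        _ ≤ P l * g l := hcon
    exact le_of_mul_le_mul_right key (hg l)
  have hQnonneg : ∀ k, 0 ≤ Q k := by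
    intro k
    rw [hQ]
    dsimp only
    split_ifs
    · exact le_trans (hPminNonneg 0) (hfeas 0)
    · exact hPminNonneg k
  -- Part 1
  have hpart1 : ∀ l, dη l Q ≤ 0 := by
    intro l
    simp only [hdη] at hneg ⊢
    have hSQ : 0 ≤ ∑ k, Q k * g k :=
      Finset.sum_nonneg fun k _ => mul_nonneg (hQnonneg k) (hg k).le
    have hTQ : 0 ≤ ∑ k, Q k := Finset.sum_nonneg fun k _ => hQnonneg k
    have hD : 0 < Real.log 2 * (σ2 + ∑ k, Q k * g k) * (Pf + ∑ k, Q k) :=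
      mul_pos (mul_pos hln2 (by linarith)) (by linarith)
    have hgl : g l ≤ g 0 := hgmono 0 l (Fin.zero_le l)
    have hdiv : g l / (Real.log 2 * (σ2 + ∑ k, Q k * g k) * (Pf + ∑ k, Q k)) ≤
        g 0 / (Real.log 2 * (σ2 + ∑ k, Q k * g k) * (Pf + ∑ k, Q k)) := by gcongr
    linarith
  refine ⟨hpart1, ?_⟩
  -- Pstar is the update of Q at 0
  have hQstar : Function.update Q 0 P1d = Pstar := by
    funext l
    rw [Function.update_apply, hPstar, hQ]
    by_cases h : l = 0
    · simp [h, max_eq_left hP1d.1]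
    · simp [h]
  rw [hQstar] at hroot
  intro P hP
  rw [hFeas] at hP
  simp only [Set.mem_setOf_eq] at hP
  have hminP := hminpow P hP
  have hPstarNonneg : ∀ l, 0 ≤ Pstar l := by
    intro l
    rw [hPstar]
    dsimp only
    split_ifs
    · exact le_trans (hPminNonneg 0) (le_max_right _ _)
    · exact hPminNonneg l
  have hPstarMin : ∀ l : Fin (L+1), l ≠ 0 → Pstar l ≤ P l := by
    intro l hl
    rw [hPstar]
    simp only [hl, if_false]
    exact hminP l
  simp only [hη]
  simp only [hdη] at hroot
  have hSg0 : (∑ k, P k * g k) - (∑ k, Pstar k * g k) ≤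
      g 0 * ((∑ k, P k) - ∑ k, Pstar k) := by
    have hterm : ∀ k : Fin (L+1), P k * g k - Pstar k * g k ≤ g 0 * (P k - Pstar k) := by
      intro k
      by_cases hk : k = 0
      · subst hk; exact le_of_eq (by ring)
      · have h1 := hPstarMin k hk
        have h2 : g k ≤ g 0 := hgmono 0 k (Fin.zero_le k)
        nlinarith [mul_nonneg (sub_nonneg.mpr h1) (sub_nonneg.mpr h2)]
    calc (∑ k, P k * g k) - (∑ k, Pstar k * g k)
        = ∑ k, (P k * g k - Pstar k * g k) := by rw [Finset.sum_sub_distrib]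
      _ ≤ ∑ k, g 0 * (P k - Pstar k) := Finset.sum_le_sum fun k _ => hterm k
      _ = g 0 * ((∑ k, P k) - ∑ k, Pstar k) := by
          rw [← Finset.mul_sum, Finset.sum_sub_distrib]
  have hS : 0 ≤ ∑ k, P k * g k :=
    Finset.sum_nonneg fun k _ => mul_nonneg (hP k).1 (hg k).le
  have hT : 0 ≤ ∑ k, P k := Finset.sum_nonneg fun k _ => (hP k).1
  have hSs : 0 ≤ ∑ k, Pstar k * g k :=
    Finset.sum_nonneg fun k _ => mul_nonneg (hPstarNonneg k) (hg k).le
  have hTs : 0 ≤ ∑ k, Pstar k := Finset.sum_nonneg fun k _ => hPstarNonneg k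
  -- abbreviate the four sums
  set S := ∑ k, P k * g k with hSdef
  set T := ∑ k, P k with hTdef
  set S' := ∑ k, Pstar k * g k with hS'def
  set T' := ∑ k, Pstar k with hT'def
  clear_value S T S' T'
  have ha : 0 < σ2 + S' := by linarith
  have hb : 0 < Pf + T' := by linarith
  have haP : 0 < σ2 + S := by linarith
  have hbP : 0 < Pf + T := by linarith
  have h1s : (0:ℝ) < 1 + S' / σ2 := by
    have := div_nonneg hSs hσ.le; linarith
  have h1p : (0:ℝ) < 1 + S / σ2 := by
    have := div_nonneg hS hσ.le; linarith
  -- stationarity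
  have hstat : Real.log (1 + S' / σ2) * (σ2 + S') = g 0 * (Pf + T') := by
    have hlb : Real.logb 2 (1 + S' / σ2) = Real.log (1 + S' / σ2) / Real.log 2 := rfl
    rw [hlb] at hroot
    have h1 : g 0 / (Real.log 2 * (σ2 + S') * (Pf + T')) =
        Real.log (1 + S' / σ2) / (Real.log 2 * (Pf + T') ^ 2) := by
      rw [div_div] at hroot
      linarith
    rw [div_eq_div_iff (by positivity) (by positivity)] at h1
    have hbne : (Real.log 2) * (Pf + T') ≠ 0 := by positivity
    apply mul_right_cancel₀ hbne
    linear_combination -h1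
  -- concavity of log
  have hconc : Real.log (1 + S / σ2) ≤
      Real.log (1 + S' / σ2) + (S - S') / (σ2 + S') := by
    have e0 : (1 + S / σ2) = ((σ2 + S) / (σ2 + S')) * (1 + S' / σ2) := by
      field_simp
    rw [e0, Real.log_mul (by positivity) (by positivity)]
    have e2 : Real.log ((σ2 + S) / (σ2 + S')) ≤ (σ2 + S) / (σ2 + S') - 1 :=
      Real.log_le_sub_one_of_pos (by positivity)
    have e3 : (σ2 + S) / (σ2 + S') - 1 = (S - S') / (σ2 + S') := by
      field_simp
      ring
    linarith
  -- final assembly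
  rw [Real.logb, Real.logb, div_div, div_div,
    div_le_div_iff₀ (by positivity) (by positivity)]
  have h6 : (S - S') / (σ2 + S') * (Pf + T') ≤ Real.log (1 + S' / σ2) * (T - T') := by
    rw [div_mul_eq_mul_div, div_le_iff₀ ha]
    calc (S - S') * (Pf + T')
        ≤ (g 0 * (T - T')) * (Pf + T') := mul_le_mul_of_nonneg_right hSg0 hb.le
      _ = (T - T') * (g 0 * (Pf + T')) := by ring
      _ = (T - T') * (Real.log (1 + S' / σ2) * (σ2 + S')) := by rw [hstat]
      _ = Real.log (1 + S' / σ2) * (T - T') * (σ2 + S') := by ring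
  have h4 : Real.log (1 + S / σ2) * (Pf + T') ≤ Real.log (1 + S' / σ2) * (Pf + T) := by
    calc Real.log (1 + S / σ2) * (Pf + T')
        ≤ (Real.log (1 + S' / σ2) + (S - S') / (σ2 + S')) * (Pf + T') :=
          mul_le_mul_of_nonneg_right hconc hb.le
      _ = Real.log (1 + S' / σ2) * (Pf + T') + (S - S') / (σ2 + S') * (Pf + T') := by
          ring
      _ ≤ Real.log (1 + S' / σ2) * (Pf + T') + Real.log (1 + S' / σ2) * (T - T') := by
          linarith
      _ = Real.log (1 + S' / σ2) * (Pf + T) := by ring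
  calc Real.log (1 + S / σ2) * (Real.log 2 * (Pf + T'))
      = Real.log 2 * (Real.log (1 + S / σ2) * (Pf + T')) := by ring
    _ ≤ Real.log 2 * (Real.log (1 + S' / σ2) * (Pf + T)) :=
        mul_le_mul_of_nonneg_left h4 hln2.le
    _ = Real.log (1 + S' / σ2) * (Real.log 2 * (Pf + T)) := by ring
end

section
/- Two-user Phase I solution (SIC order decoding user 1 first): if ∂η/∂P_1 ≥ ∂η/∂P_2 ≥ 0 at (P_1^max, P_2^max), then η is nondecreasing in both coordinates throughout the feasible region, so the EE maximizer is P_1 = P_1^max and P_2 = min(P_2^max, P_1^max g_1/((2^{R_1^min}−1)g_2) − σ²/g_2), i.e., user 2 transmits at the largest power compatible with user 1's QoS and its own power budget. -/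
/-!
Write `S = σ² + P₁g₁ + P₂g₂`, `T = P_f + P₁ + P₂` and `L = log (S / σ²)`, so that `η = L / (T log 2)`.
Raising either power gains at least `g₂` in `S` per unit of `T`, because `g₁ ≥ g₂`. Along such
moves `S L - g₂ T` can only grow (`S L` grows at least as fast as `S`), and `∂η/∂P₂ ≥ 0` at the
corner `(P₁^max, P₂^max)` says exactly `S L ≤ g₂ T` there; hence `S L ≤ g₂ T` on the whole box.
That inequality says `L / T` is nondecreasing along those moves, i.e. `η` is coordinatewise
nondecreasing. The maximizer is then the feasible point that is largest in both coordinates: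
full power for user 1 and the largest `P₂` that user 1's QoS constraint still admits.
-/

open Real

lemma sub_le_mul_log_sub_log {a b : ℝ} (ha : 0 < a) (hab : a ≤ b) :
    b - a ≤ b * (log b - log a) := by
  have hb : 0 < b := ha.trans_le hab
  have h := one_sub_inv_le_log_of_pos (div_pos hb ha)
  rw [log_div hb.ne' ha.ne', inv_div] at h
  have hba : b * (1 - a / b) = b - a := by field_simp
  nlinarith [mul_le_mul_of_nonneg_left h hb.le]

section RatePerPower

variable {σ c Sa Sb Ta Tb : ℝ}

lemma mul_log_sub_log_le_of_le (hσ : 0 < σ) (hσa : σ ≤ Sa) (hab : Sa ≤ Sb)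
    (hgain : c * (Tb - Ta) ≤ Sb - Sa) (hb : Sb * (log Sb - log σ) ≤ c * Tb) :
    Sa * (log Sa - log σ) ≤ c * Ta := by
  have hLa : 0 ≤ log Sa - log σ := sub_nonneg.mpr (log_le_log hσ hσa)
  have hlog := sub_le_mul_log_sub_log (hσ.trans_le hσa) hab
  nlinarith [mul_nonneg (sub_nonneg.mpr hab) hLa]

lemma div_le_div_of_mul_log_sub_log_le (hSa : 0 < Sa) (hab : Sa ≤ Sb) (hTa : 0 < Ta)
    (hT : Ta ≤ Tb) (hgain : c * (Tb - Ta) ≤ Sb - Sa) (hb : Sb * (log Sb - log σ) ≤ c * Tb) :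
    (log Sa - log σ) / Ta ≤ (log Sb - log σ) / Tb := by
  have hTb : 0 < Tb := hTa.trans_le hT
  rw [div_le_div_iff₀ hTa hTb]
  refine le_of_mul_le_mul_left ?_ (hSa.trans_le hab)
  have hlog := sub_le_mul_log_sub_log hSa hab
  nlinarith [mul_le_mul_of_nonneg_right hlog hTb.le, mul_le_mul_of_nonneg_right hgain hTb.le,
    mul_le_mul_of_nonneg_right hb (sub_nonneg.mpr hT)]

lemma mul_log_sub_log_le_of_sub_nonneg (hS : 0 < Sa) (hT : 0 < Ta)
    (h : 0 ≤ c / (log 2 * Sa * Ta) - (log Sa - log σ) / log 2 / Ta ^ 2) :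
    Sa * (log Sa - log σ) ≤ c * Ta := by
  have hlog2 : 0 < log 2 := log_pos one_lt_two
  have hscale : c * Ta - Sa * (log Sa - log σ)
      = (c / (log 2 * Sa * Ta) - (log Sa - log σ) / log 2 / Ta ^ 2) * (log 2 * Sa * Ta ^ 2) := by
    field_simp
  nlinarith [mul_nonneg h (by positivity : (0 : ℝ) ≤ log 2 * Sa * Ta ^ 2)]

end RatePerPower

lemma logb_one_add_div {σ X : ℝ} (hσ : 0 < σ) (hX : 0 < σ + X) :
    logb 2 (1 + X / σ) = (log (σ + X) - log σ) / log 2 := by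
  rw [logb, one_add_div hσ.ne', log_div hX.ne' hσ.ne']

lemma mul_add_le_iff_le_div_sub {k g σ y P : ℝ} (hk : 0 < k) (hg : 0 < g) :
    k * (y * g + σ) ≤ P ↔ y ≤ P / (k * g) - σ / g := by
  have hscale : (y + σ / g) * (k * g) = k * (y * g + σ) := by field_simp
  rw [le_sub_iff_add_le, le_div_iff₀ (mul_pos hk hg), hscale]

noncomputable def energyEfficiency (g1 g2 σ2 Pf P1 P2 : ℝ) : ℝ :=
  logb 2 (1 + (P1 * g1 + P2 * g2) / σ2) / (Pf + P1 + P2)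

section TwoUsers

variable {g1 g2 σ2 Pf : ℝ}

lemma energyEfficiency_eq (hg1 : 0 ≤ g1) (hg2 : 0 ≤ g2) (hσ : 0 < σ2) {P1 P2 : ℝ}
    (hP1 : 0 ≤ P1) (hP2 : 0 ≤ P2) :
    energyEfficiency g1 g2 σ2 Pf P1 P2
      = (log (σ2 + (P1 * g1 + P2 * g2)) - log σ2) / (Pf + P1 + P2) / log 2 := by
  rw [energyEfficiency, logb_one_add_div hσ (by positivity), div_right_comm]

lemma energyEfficiency_mono (hg : g2 ≤ g1) (hg2 : 0 < g2) (hσ : 0 < σ2) (hPf : 0 < Pf)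
    {P1max P2max : ℝ}
    (hcorner : (σ2 + (P1max * g1 + P2max * g2)) * (log (σ2 + (P1max * g1 + P2max * g2)) - log σ2)
      ≤ g2 * (Pf + P1max + P2max))
    {x y x' y' : ℝ} (hx : 0 ≤ x) (hy : 0 ≤ y) (hxx' : x ≤ x') (hyy' : y ≤ y')
    (hx' : x' ≤ P1max) (hy' : y' ≤ P2max) :
    energyEfficiency g1 g2 σ2 Pf x y ≤ energyEfficiency g1 g2 σ2 Pf x' y' := by
  have hg1 : 0 < g1 := hg2.trans_le hg
  have gain : ∀ {a b a' b' : ℝ}, a ≤ a' → b ≤ b' →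
      g2 * ((Pf + a' + b') - (Pf + a + b)) ≤ (σ2 + (a' * g1 + b' * g2)) - (σ2 + (a * g1 + b * g2)) :=
    fun ha hb => by nlinarith [mul_le_mul_of_nonneg_left hg (sub_nonneg.mpr ha)]
  have grow : ∀ {a b a' b' : ℝ}, a ≤ a' → b ≤ b' →
      σ2 + (a * g1 + b * g2) ≤ σ2 + (a' * g1 + b' * g2) :=
    fun ha hb => by nlinarith [mul_le_mul_of_nonneg_right ha hg1.le, mul_le_mul_of_nonneg_right hb hg2.le]
  have hσS : σ2 ≤ σ2 + (x * g1 + y * g2) := by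
    simpa using grow (b := 0) (a := 0) hx hy
  have hσS' := hσS.trans (grow hxx' hyy')
  have hmarginal := mul_log_sub_log_le_of_le hσ hσS' (grow hx' hy') (gain hx' hy') hcorner
  rw [energyEfficiency_eq hg1.le hg2.le hσ hx hy,
    energyEfficiency_eq hg1.le hg2.le hσ (hx.trans hxx') (hy.trans hyy')]
  refine div_le_div_of_nonneg_right ?_ (log_pos one_lt_two).le
  exact div_le_div_of_mul_log_sub_log_le (hσ.trans_le hσS) (grow hxx' hyy') (by positivity)
    (by linarith) (gain hxx' hyy') hmarginal

end TwoUsers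

theorem two_user_phase1_general (g1 g2 σ2 Pf P1max P2max R1min R2min : ℝ)
    (hg : g2 ≤ g1) (hg2 : 0 < g2) (hσ : 0 < σ2) (hPf : 0 < Pf)
    (hR1 : 0 < R1min)
    (η : ℝ → ℝ → ℝ)
    (hη : η = fun P1 P2 => Real.logb 2 (1 + (P1 * g1 + P2 * g2) / σ2) / (Pf + P1 + P2))
    (dη : ℝ → ℝ → ℝ → ℝ)
    (hdη : dη = fun gl P1 P2 =>
      gl / (Real.log 2 * (σ2 + P1 * g1 + P2 * g2) * (Pf + P1 + P2))
        - Real.logb 2 (1 + (P1 * g1 + P2 * g2) / σ2) / (Pf + P1 + P2) ^ 2)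
    (Feas : Set (ℝ × ℝ))
    (hFeas : Feas = {p : ℝ × ℝ | 0 ≤ p.1 ∧ p.1 ≤ P1max ∧ 0 ≤ p.2 ∧ p.2 ≤ P2max ∧
      ((2:ℝ) ^ R1min - 1) * (p.2 * g2 + σ2) ≤ p.1 * g1 ∧
      ((2:ℝ) ^ R2min - 1) * σ2 ≤ p.2 * g2})
    (hfeas : Feas.Nonempty)
    (hsign : 0 ≤ dη g2 P1max P2max ∧ dη g2 P1max P2max ≤ dη g1 P1max P2max)
    (P2star : ℝ)
    (hP2star : P2star = min P2max (P1max * g1 / (((2:ℝ) ^ R1min - 1) * g2) - σ2 / g2)) :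
    (∀ p ∈ Feas, ∀ q ∈ Feas, p.1 ≤ q.1 → p.2 ≤ q.2 → η p.1 p.2 ≤ η q.1 q.2) ∧
    (P1max, P2star) ∈ Feas ∧
    (∀ p ∈ Feas, η p.1 p.2 ≤ η P1max P2star) := by
  obtain ⟨⟨w1, w2⟩, hw⟩ := hfeas
  obtain ⟨hw1, hw1m, hw2, hw2m, hwq1, hwq2⟩ := hFeas ▸ hw
  have hg1 : 0 < g1 := hg2.trans_le hg
  have hk : 0 < (2 : ℝ) ^ R1min - 1 := sub_pos.mpr (one_lt_rpow one_lt_two hR1)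
  have hP1 : 0 ≤ P1max := hw1.trans hw1m
  have hP2 : 0 ≤ P2max := hw2.trans hw2m
  have hcorner : (σ2 + (P1max * g1 + P2max * g2)) * (log (σ2 + (P1max * g1 + P2max * g2)) - log σ2)
      ≤ g2 * (Pf + P1max + P2max) := by
    have h := hsign.1
    simp only [hdη] at h
    rw [logb_one_add_div hσ (by positivity), ← add_assoc] at h
    rw [← add_assoc]
    exact mul_log_sub_log_le_of_sub_nonneg (by positivity) (by positivity) h
  have hmono : ∀ p ∈ Feas, ∀ q ∈ Feas, p.1 ≤ q.1 → p.2 ≤ q.2 → η p.1 p.2 ≤ η q.1 q.2 := by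
    rintro p hp q hq h1 h2
    obtain ⟨hp1, -, hp2, -⟩ := hFeas ▸ hp
    obtain ⟨-, hq1m, -, hq2m, -⟩ := hFeas ▸ hq
    subst hη
    exact energyEfficiency_mono hg hg2 hσ hPf hcorner hp1 hp2 h1 h2 hq1m hq2m
  have hcap : ∀ z1 z2 : ℝ, z1 ≤ P1max → ((2 : ℝ) ^ R1min - 1) * (z2 * g2 + σ2) ≤ z1 * g1 →
      z2 ≤ P1max * g1 / (((2 : ℝ) ^ R1min - 1) * g2) - σ2 / g2 := fun z1 z2 hz1 hq =>
    (mul_add_le_iff_le_div_sub hk hg2).mp (hq.trans (mul_le_mul_of_nonneg_right hz1 hg1.le))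
  have hstar : (P1max, P2star) ∈ Feas := by
    have hw2star : w2 ≤ P2star := hP2star ▸ le_min hw2m (hcap w1 w2 hw1m hwq1)
    rw [hFeas]
    refine ⟨hP1, le_rfl, hw2.trans hw2star, hP2star ▸ min_le_left _ _, ?_, ?_⟩
    · exact (mul_add_le_iff_le_div_sub hk hg2).mpr (hP2star ▸ min_le_right _ _)
    · exact hwq2.trans (mul_le_mul_of_nonneg_right hw2star hg2.le)
  refine ⟨hmono, hstar, fun p hp => hmono p hp _ hstar ?_ ?_⟩
  · exact (hFeas ▸ hp).2.1
  · obtain ⟨-, hp1m, -, hp2m, hpq1, -⟩ := hFeas ▸ hp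
    exact hP2star ▸ le_min hp2m (hcap p.1 p.2 hp1m hpq1)

theorem two_user_phase1 (g1 g2 σ2 Pf P1max P2max R1min R2min : ℝ)
    (hg : g2 ≤ g1) (hg2 : 0 < g2) (hσ : 0 < σ2) (hPf : 0 < Pf)
    (hR1 : 0 < R1min) (hR2 : 0 ≤ R2min)
    (η : ℝ → ℝ → ℝ)
    (hη : η = fun P1 P2 => Real.logb 2 (1 + (P1 * g1 + P2 * g2) / σ2) / (Pf + P1 + P2))
    (dη : ℝ → ℝ → ℝ → ℝ)
    (hdη : dη = fun gl P1 P2 =>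
      gl / (Real.log 2 * (σ2 + P1 * g1 + P2 * g2) * (Pf + P1 + P2))
        - Real.logb 2 (1 + (P1 * g1 + P2 * g2) / σ2) / (Pf + P1 + P2) ^ 2)
    (Feas : Set (ℝ × ℝ))
    (hFeas : Feas = {p : ℝ × ℝ | 0 ≤ p.1 ∧ p.1 ≤ P1max ∧ 0 ≤ p.2 ∧ p.2 ≤ P2max ∧
      ((2:ℝ) ^ R1min - 1) * (p.2 * g2 + σ2) ≤ p.1 * g1 ∧
      ((2:ℝ) ^ R2min - 1) * σ2 ≤ p.2 * g2})
    (hfeas : Feas.Nonempty)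
    (hsign : 0 ≤ dη g2 P1max P2max ∧ dη g2 P1max P2max ≤ dη g1 P1max P2max)
    (P2star : ℝ)
    (hP2star : P2star = min P2max (P1max * g1 / (((2:ℝ) ^ R1min - 1) * g2) - σ2 / g2)) :
    (∀ p ∈ Feas, ∀ q ∈ Feas, p.1 ≤ q.1 → p.2 ≤ q.2 → η p.1 p.2 ≤ η q.1 q.2) ∧
    (P1max, P2star) ∈ Feas ∧
    (∀ p ∈ Feas, η p.1 p.2 ≤ η P1max P2star) :=
  two_user_phase1_general g1 g2 σ2 Pf P1max P2max R1min R2min hg hg2 hσ hPf hR1 η hη dη hdη Feas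
    hFeas hfeas hsign P2star hP2star
end

section
/- Reversed SIC order Phase I solution: if ∂η/∂P_1 ≥ ∂η/∂P_2 ≥ 0 at (P_1^max, P_2^max), then with user 2 decoded first (so the QoS constraints are P_2 g_2 ≥ (2^{R_2^min}−1)(P_1 g_1 + σ²) and P_1 g_1 ≥ (2^{R_1^min}−1)σ²), the EE maximizer is P_2 = P_2^max and P_1 = min(P_1^max, P_2^max g_2/((2^{R_2^min}−1)g_1) − σ²/g_1). -/
lemma lemA (σ2 x x' : ℝ) (hσ : 0 < σ2) (hx : σ2 ≤ x) (hxx : x ≤ x') :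
    x' - x ≤ x' * Real.log (x' / σ2) - x * Real.log (x / σ2) := by
  have hx0 : 0 < x := lt_of_lt_of_le hσ hx
  have hx'0 : 0 < x' := lt_of_lt_of_le hx0 hxx
  have h1 : Real.log (x / x') ≤ x / x' - 1 := Real.log_le_sub_one_of_pos (by positivity)
  rw [Real.log_div (ne_of_gt hx0) (ne_of_gt hx'0)] at h1
  rw [Real.log_div (ne_of_gt hx0) (ne_of_gt hσ), Real.log_div (ne_of_gt hx'0) (ne_of_gt hσ)]
  have h2 : 0 ≤ Real.log x - Real.log σ2 := by
    have := Real.log_le_log hσ hx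
    linarith
  have h3 : x' * (Real.log x - Real.log x') ≤ x - x' := by
    have := mul_le_mul_of_nonneg_left h1 hx'0.le
    have hxx' : x' * (x / x') = x := by field_simp
    nlinarith
  nlinarith [mul_nonneg (sub_nonneg.2 hxx) h2]

lemma mono_line (σ2 c g b T : ℝ) (hσ : 0 < σ2) (hc : σ2 ≤ c) (hg : 0 < g)
    (hb : 0 < b) (hT : 0 ≤ T)
    (hcond : (c + g * T) * Real.log ((c + g * T) / σ2) ≤ g * (b + T)) :
    MonotoneOn (fun t => Real.log ((c + g * t) / σ2) / (b + t)) (Set.Icc 0 T) := by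
  have hd : ∀ t : ℝ, 0 ≤ t → HasDerivAt (fun t => Real.log ((c + g * t) / σ2) / (b + t))
      ((((c + g * t) / σ2)⁻¹ * (g / σ2) * (b + t) - Real.log ((c + g * t) / σ2) * 1) / (b + t) ^ 2) t := by
    intro t ht
    have hpos : 0 < c + g * t := by nlinarith
    have h1 : HasDerivAt (fun s : ℝ => c + g * s) g t := by
      simpa using ((hasDerivAt_id t).const_mul g).const_add c
    have h2 : HasDerivAt (fun s : ℝ => (c + g * s) / σ2) (g / σ2) t := h1.div_const σ2
    have h3 : HasDerivAt (fun s : ℝ => Real.log ((c + g * s) / σ2))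
        (((c + g * t) / σ2)⁻¹ * (g / σ2)) t :=
      (Real.hasDerivAt_log (by positivity)).comp t h2
    have h4 : HasDerivAt (fun s : ℝ => b + s) 1 t := by
      simpa using (hasDerivAt_id t).const_add b
    exact h3.div h4 (by positivity)
  apply monotoneOn_of_deriv_nonneg (convex_Icc 0 T)
  · exact fun t ht => ((hd t ht.1).differentiableAt.continuousAt).continuousWithinAt
  · rw [interior_Icc]
    exact fun t ht => (hd t ht.1.le).differentiableAt.differentiableWithinAt
  · intro t ht
    rw [interior_Icc] at ht
    rw [(hd t ht.1.le).deriv]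
    have hpos : 0 < c + g * t := by nlinarith [ht.1]
    have hbt : 0 < b + t := by linarith [ht.1]
    have hnum : Real.log ((c + g * t) / σ2) * (c + g * t) ≤ g * (b + t) := by
      have hA := lemA σ2 (c + g * t) (c + g * T) hσ (by nlinarith [ht.1]) (by nlinarith [ht.2.le])
      nlinarith
    have hinv : ((c + g * t) / σ2)⁻¹ * (g / σ2) = g / (c + g * t) := by
      rw [inv_div]
      field_simp
    rw [hinv]
    apply div_nonneg _ (by positivity)
    rw [mul_one, sub_nonneg, div_mul_eq_mul_div, le_div_iff₀ hpos]
    exact hnum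

set_option maxHeartbeats 2000000 in
theorem two_user_phase1_reversed (g1 g2 σ2 Pf P1max P2max R1min R2min : ℝ)
    (hg : g2 ≤ g1) (hg2 : 0 < g2) (hσ : 0 < σ2) (hPf : 0 < Pf)
    (hR1 : 0 ≤ R1min) (hR2 : 0 < R2min)
    (η : ℝ → ℝ → ℝ)
    (hη : η = fun P1 P2 => Real.logb 2 (1 + (P1 * g1 + P2 * g2) / σ2) / (Pf + P1 + P2))
    (dη : ℝ → ℝ → ℝ → ℝ)
    (hdη : dη = fun gl P1 P2 =>
      gl / (Real.log 2 * (σ2 + P1 * g1 + P2 * g2) * (Pf + P1 + P2))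
        - Real.logb 2 (1 + (P1 * g1 + P2 * g2) / σ2) / (Pf + P1 + P2) ^ 2)
    (Feas : Set (ℝ × ℝ))
    (hFeas : Feas = {p : ℝ × ℝ | 0 ≤ p.1 ∧ p.1 ≤ P1max ∧ 0 ≤ p.2 ∧ p.2 ≤ P2max ∧
      ((2:ℝ) ^ R2min - 1) * (p.1 * g1 + σ2) ≤ p.2 * g2 ∧
      ((2:ℝ) ^ R1min - 1) * σ2 ≤ p.1 * g1})
    (hfeas : Feas.Nonempty)
    (hsign : 0 ≤ dη g2 P1max P2max ∧ dη g2 P1max P2max ≤ dη g1 P1max P2max)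
    (P1star : ℝ)
    (hP1star : P1star = min P1max (P2max * g2 / (((2:ℝ) ^ R2min - 1) * g1) - σ2 / g1)) :
    (P1star, P2max) ∈ Feas ∧
    (∀ p ∈ Feas, η p.1 p.2 ≤ η P1star P2max) := by
  have hg1 : 0 < g1 := lt_of_lt_of_le hg2 hg
  have hK2 : 0 < (2:ℝ) ^ R2min - 1 := by
    have : (1:ℝ) < (2:ℝ) ^ R2min :=
      (Real.one_lt_rpow_iff_of_pos two_pos).mpr (Or.inl ⟨one_lt_two, hR2⟩)
    linarith
  have hK1 : 0 ≤ (2:ℝ) ^ R1min - 1 := by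
    have : (1:ℝ) ≤ (2:ℝ) ^ R1min := Real.one_le_rpow one_le_two hR1
    linarith
  obtain ⟨K2, hK2def⟩ : ∃ x : ℝ, x = (2:ℝ) ^ R2min - 1 := ⟨_, rfl⟩
  obtain ⟨K1, hK1def⟩ : ∃ x : ℝ, x = (2:ℝ) ^ R1min - 1 := ⟨_, rfl⟩
  rw [← hK2def, ← hK1def] at hFeas
  rw [← hK2def] at hP1star
  rw [← hK2def] at hK2
  rw [← hK1def] at hK1
  obtain ⟨q, hq⟩ := hfeas
  rw [hFeas] at hq
  obtain ⟨hq1, hq2, hq3, hq4, hq5, hq6⟩ := hq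
  have hP1max0 : 0 ≤ P1max := le_trans hq1 hq2
  have hP2max0 : 0 ≤ P2max := le_trans hq3 hq4
  obtain ⟨A, hAdef⟩ : ∃ x : ℝ, x = P2max * g2 / (K2 * g1) - σ2 / g1 := ⟨_, rfl⟩
  rw [← hAdef] at hP1star
  have hKg : 0 < K2 * g1 := by positivity
  have hAmul : A * (K2 * g1) = P2max * g2 - σ2 * K2 := by
    rw [hAdef]
    field_simp
  have hq5' : q.2 * g2 ≤ P2max * g2 := mul_le_mul_of_nonneg_right hq4 hg2.le
  have hq1g : 0 ≤ q.1 * g1 := mul_nonneg hq1 hg1.le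
  have hA0 : 0 ≤ A := by
    have h0 : (0:ℝ) * (K2 * g1) ≤ A * (K2 * g1) := by
      rw [zero_mul]
      have hK2q : 0 ≤ K2 * (q.1 * g1) := mul_nonneg hK2.le hq1g
      linarith [hAmul, hq5, hq5']
    exact le_of_mul_le_mul_right h0 hKg
  have hP1star0 : 0 ≤ P1star := by rw [hP1star]; exact le_min hP1max0 hA0
  have hP1starle : P1star ≤ P1max := by rw [hP1star]; exact min_le_left _ _
  have hP1starA : P1star ≤ A := by rw [hP1star]; exact min_le_right _ _
  have hQoS2 : K2 * (P1star * g1 + σ2) ≤ P2max * g2 := by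
    have h := mul_le_mul_of_nonneg_right hP1starA hKg.le
    linarith [hAmul]
  have hQoS1 : K1 * σ2 ≤ P1star * g1 := by
    rw [hP1star]
    rcases min_cases P1max A with ⟨he, _⟩ | ⟨he, _⟩ <;> rw [he]
    · linarith [hq6, mul_le_mul_of_nonneg_right hq2 hg1.le]
    · have h : K1 * σ2 * K2 ≤ A * g1 * K2 := by
        linarith [hAmul, hq5, hq5', mul_le_mul_of_nonneg_left hq6 hK2.le]
      exact le_of_mul_le_mul_right h hK2
  have hmem : (P1star, P2max) ∈ Feas := by
    rw [hFeas]
    exact ⟨hP1star0, hP1starle, hP2max0, le_refl _, hQoS2, hQoS1⟩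
  refine ⟨hmem, ?_⟩
  -- corner conditions
  have hL : 0 < Real.log 2 := Real.log_pos one_lt_two
  have hL0 : Real.log 2 ≠ 0 := ne_of_gt hL
  obtain ⟨x0, hx0def⟩ : ∃ x : ℝ, x = σ2 + P1max * g1 + P2max * g2 := ⟨_, rfl⟩
  obtain ⟨T0, hT0def⟩ : ∃ x : ℝ, x = Pf + P1max + P2max := ⟨_, rfl⟩
  have hx0pos : 0 < x0 := by
    rw [hx0def]
    linarith [mul_nonneg hP1max0 hg1.le, mul_nonneg hP2max0 hg2.le]
  have hT0pos : 0 < T0 := by rw [hT0def]; linarith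
  have harg : (1 + (P1max * g1 + P2max * g2) / σ2) = x0 / σ2 := by
    rw [hx0def]; field_simp; ring
  have hcorner : ∀ gl : ℝ, 0 < gl → 0 ≤ dη gl P1max P2max →
      x0 * Real.log (x0 / σ2) ≤ gl * T0 := by
    intro gl hgl hs
    rw [hdη] at hs
    simp only [Real.logb] at hs
    rw [harg, ← hx0def, ← hT0def] at hs
    have h := sub_nonneg.mp hs
    have h2 := (div_le_div_iff₀ (by positivity) (by positivity)).mp h
    have h3 : Real.log (x0 / σ2) / Real.log 2 * (Real.log 2 * x0 * T0) =
        Real.log (x0 / σ2) * x0 * T0 := by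
      field_simp
    rw [h3] at h2
    have h4 : (x0 * Real.log (x0 / σ2)) * T0 ≤ (gl * T0) * T0 := by
      rw [show x0 * Real.log (x0 / σ2) * T0 = Real.log (x0 / σ2) * x0 * T0 from by ring,
        show gl * T0 * T0 = gl * T0 ^ 2 from by ring]
      exact h2
    exact le_of_mul_le_mul_right h4 hT0pos
  have hC2 : x0 * Real.log (x0 / σ2) ≤ g2 * T0 := hcorner g2 hg2 hsign.1
  have hC1 : x0 * Real.log (x0 / σ2) ≤ g1 * T0 := hcorner g1 hg1 (le_trans hsign.1 hsign.2)
  have ηeq : ∀ a b : ℝ, η a b =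
      Real.log ((σ2 + (a * g1 + b * g2)) / σ2) / (Pf + a + b) / Real.log 2 := by
    intro a b
    rw [hη]
    simp only [Real.logb]
    rw [show (1 + (a * g1 + b * g2) / σ2) = (σ2 + (a * g1 + b * g2)) / σ2 from by field_simp]
    ring
  intro p hp
  rw [hFeas] at hp
  obtain ⟨hp1, hp2, hp3, hp4, hp5, hp6⟩ := hp
  obtain ⟨p1, p2⟩ := p
  simp only [] at hp1 hp2 hp3 hp4 hp5 hp6 ⊢
  have hp1A : p1 ≤ A := by
    have h5 : p2 * g2 ≤ P2max * g2 := mul_le_mul_of_nonneg_right hp4 hg2.le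
    have h : p1 * (K2 * g1) ≤ A * (K2 * g1) := by linarith [hAmul, hp5, h5]
    exact le_of_mul_le_mul_right h hKg
  have hp1star : p1 ≤ P1star := by rw [hP1star]; exact le_min hp2 hp1A
  -- Step 1: increase p2 to P2max
  have cond2 : ((σ2 + p1 * g1) + g2 * P2max) *
      Real.log (((σ2 + p1 * g1) + g2 * P2max) / σ2) ≤ g2 * ((Pf + p1) + P2max) := by
    have hp1g : 0 ≤ p1 * g1 := mul_nonneg hp1 hg1.le
    have hxle : (σ2 + p1 * g1) + g2 * P2max ≤ x0 := by
      rw [hx0def]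
      have := mul_le_mul_of_nonneg_right hp2 hg1.le
      linarith
    have hA := lemA σ2 ((σ2 + p1 * g1) + g2 * P2max) x0 hσ (by linarith [mul_nonneg hP2max0 hg2.le]) hxle
    have hgg : 0 ≤ (P1max - p1) * (g1 - g2) := by
      apply mul_nonneg <;> linarith
    rw [hx0def] at hA
    rw [hx0def, hT0def] at hC2
    linarith [hA, hC2, hgg]
  have hm2 := mono_line σ2 (σ2 + p1 * g1) g2 (Pf + p1) P2max hσ
    (by linarith [mul_nonneg hp1 hg1.le]) hg2 (by linarith) hP2max0 cond2
  have step1 : Real.log ((σ2 + (p1 * g1 + p2 * g2)) / σ2) / (Pf + p1 + p2) ≤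
      Real.log ((σ2 + (p1 * g1 + P2max * g2)) / σ2) / (Pf + p1 + P2max) := by
    have h := hm2 (Set.mem_Icc.mpr ⟨hp3, hp4⟩) (Set.mem_Icc.mpr ⟨hP2max0, le_refl _⟩) hp4
    simp only [] at h
    rw [show σ2 + (p1 * g1 + p2 * g2) = (σ2 + p1 * g1) + g2 * p2 from by ring,
      show Pf + p1 + p2 = (Pf + p1) + p2 from by ring,
      show σ2 + (p1 * g1 + P2max * g2) = (σ2 + p1 * g1) + g2 * P2max from by ring,
      show Pf + p1 + P2max = (Pf + p1) + P2max from by ring]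
    exact h
  -- Step 2: increase p1 to P1star
  have cond1 : ((σ2 + P2max * g2) + g1 * P1max) *
      Real.log (((σ2 + P2max * g2) + g1 * P1max) / σ2) ≤ g1 * ((Pf + P2max) + P1max) := by
    rw [show (σ2 + P2max * g2) + g1 * P1max = x0 from by rw [hx0def]; ring,
      show (Pf + P2max) + P1max = T0 from by rw [hT0def]; ring]
    exact hC1
  have hm1 := mono_line σ2 (σ2 + P2max * g2) g1 (Pf + P2max) P1max hσ
    (by linarith [mul_nonneg hP2max0 hg2.le]) hg1 (by linarith) hP1max0 cond1
  have step2 : Real.log ((σ2 + (p1 * g1 + P2max * g2)) / σ2) / (Pf + p1 + P2max) ≤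
      Real.log ((σ2 + (P1star * g1 + P2max * g2)) / σ2) / (Pf + P1star + P2max) := by
    have h := hm1 (Set.mem_Icc.mpr ⟨hp1, hp2⟩) (Set.mem_Icc.mpr ⟨hP1star0, hP1starle⟩) hp1star
    simp only [] at h
    rw [show σ2 + (p1 * g1 + P2max * g2) = (σ2 + P2max * g2) + g1 * p1 from by ring,
      show Pf + p1 + P2max = (Pf + P2max) + p1 from by ring,
      show σ2 + (P1star * g1 + P2max * g2) = (σ2 + P2max * g2) + g1 * P1star from by ring,
      show Pf + P1star + P2max = (Pf + P2max) + P1star from by ring]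
    exact h
  rw [ηeq, ηeq]
  exact div_le_div_of_nonneg_right (le_trans step1 step2) hL.le
end

section
/- Under reversed SIC order (user 2 decoded first), substituting user 2's QoS constraint at equality P_1 = kP_2 + b with k = g_2/((2^{R_2^min}−1)g_1) and b = −σ²/g_1 reduces the two-variable EE to the single-variable function f(P_2) = log₂(1 + ((kP_2+b)g_1 + P_2 g_2)/σ²) / (P_f + kP_2 + P_2 + b), and f simplifies to f(P_2) = log₂(2^{R_2^min} P_2 g_2 / ((2^{R_2^min}−1)σ²)) / (P_f + (k+1)P_2 + b) on the domain where the argument of the log exceeds 1; moreover f is strictly pseudo-concave on that domain. -/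
/-!
At QoS equality, `1 + ((k P₂ + b) g₁ + P₂ g₂) / σ²` collapses to `c P₂` with
`c = 2^R g₂ / ((2^R - 1) σ²) > 0`, so `f P₂ = logb 2 (c P₂) / ((k + 1) P₂ + (P_f + b))`:
a strictly concave function over a positive affine one. For such a ratio, cross-multiplying
`f x ≤ f y` and bounding the numerator at `y` by its strict tangent line at `x` leaves exactly
`f' x * (y - x) > 0`.
-/

open Real Set

lemma qos_power_identity {a g1 g2 σ2 : ℝ} (ha : a ≠ 1) (hg1 : g1 ≠ 0) (P2 : ℝ) :
    (g2 / ((a - 1) * g1) * P2 + -σ2 / g1) * g1 + P2 * g2 = a * P2 * g2 / (a - 1) - σ2 := by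
  have ha' : a - 1 ≠ 0 := sub_ne_zero.mpr ha
  field_simp
  ring

lemma strictConcaveOn_logb_const_mul {b c : ℝ} (hb : 1 < b) (hc : 0 < c) :
    StrictConcaveOn ℝ (Ioi 0) fun x => logb b (c * x) := by
  refine ⟨convex_Ioi 0, fun x hx y hy hxy u v hu hv huv => ?_⟩
  have hlog := strictConcaveOn_log_Ioi.2 (mul_pos hc hx) (mul_pos hc hy)
    (by simpa [hc.ne'] using hxy) hu hv huv
  simp only [smul_eq_mul, logb] at hlog ⊢
  rw [show c * (u * x + v * y) = u * (c * x) + v * (c * y) by ring]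
  calc u * (log (c * x) / log b) + v * (log (c * y) / log b)
      = (u * log (c * x) + v * log (c * y)) / log b := by ring
    _ < log (u * (c * x) + v * (c * y)) / log b := div_lt_div_of_pos_right hlog (log_pos hb)

namespace StrictConcaveOn

variable {S : Set ℝ} {g : ℝ → ℝ} {x y : ℝ}

theorem lt_add_deriv_mul_sub (hg : StrictConcaveOn ℝ S g) (hx : x ∈ S) (hy : y ∈ S)
    (hxy : x ≠ y) (hgx : DifferentiableAt ℝ g x) :
    g y < g x + deriv g x * (y - x) := by
  rcases hxy.lt_or_gt with hlt | hgt
  · have hslope := hg.slope_lt_deriv hx hy hlt hgx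
    rw [slope_def_field, div_lt_iff₀ (sub_pos.mpr hlt)] at hslope
    linarith
  · have hslope := hg.deriv_lt_slope hy hx hgt hgx
    rw [slope_def_field, lt_div_iff₀ (sub_pos.mpr hgt)] at hslope
    linarith

theorem pseudoconcave_div_affine (hg : StrictConcaveOn ℝ S g) (hx : x ∈ S) (hy : y ∈ S)
    (hxy : x ≠ y) (hgx : DifferentiableAt ℝ g x) {e d : ℝ} (hdx : 0 < e * x + d)
    (hdy : 0 < e * y + d) (hle : g x / (e * x + d) ≤ g y / (e * y + d)) :
    0 < deriv (fun t => g t / (e * t + d)) x * (y - x) := by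
  have hden : HasDerivAt (fun t => e * t + d) e x := by
    simpa using ((hasDerivAt_id x).const_mul e).add_const d
  have hquot : HasDerivAt (fun t => g t / (e * t + d))
      ((deriv g x * (e * x + d) - g x * e) / (e * x + d) ^ 2) x :=
    hgx.hasDerivAt.div hden hdx.ne'
  rw [hquot.deriv, div_mul_eq_mul_div]
  refine div_pos ?_ (by positivity)
  have htangent := mul_lt_mul_of_pos_right (hg.lt_add_deriv_mul_sub hx hy hxy hgx) hdx
  rw [div_le_div_iff₀ hdx hdy] at hle
  nlinarith

end StrictConcaveOn

theorem reversed_sic_single_variable_general (g1 g2 σ2 Pf R2min k b : ℝ)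
    (hg : g2 ≤ g1) (hg2 : 0 < g2) (hσ : 0 < σ2) (hR2 : 0 < R2min)
    (hk : k = g2 / (((2:ℝ) ^ R2min - 1) * g1))
    (hb : b = -σ2 / g1)
    (f : ℝ → ℝ)
    (hf : f = fun P2 => Real.logb 2 (1 + ((k * P2 + b) * g1 + P2 * g2) / σ2)
      / (Pf + k * P2 + P2 + b))
    (Dom : Set ℝ)
    (hDom : Dom = {P2 : ℝ |
      1 < (2:ℝ) ^ R2min * P2 * g2 / (((2:ℝ) ^ R2min - 1) * σ2) ∧
      0 < Pf + k * P2 + P2 + b}) :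
    (∀ P2 : ℝ, (k * P2 + b) * g1 + P2 * g2
        = (2:ℝ) ^ R2min * P2 * g2 / ((2:ℝ) ^ R2min - 1) - σ2) ∧
    (∀ P2 ∈ Dom, f P2 =
      Real.logb 2 ((2:ℝ) ^ R2min * P2 * g2 / (((2:ℝ) ^ R2min - 1) * σ2))
        / (Pf + (k + 1) * P2 + b)) ∧
    (∀ x ∈ Dom, ∀ y ∈ Dom, x ≠ y → f x ≤ f y → 0 < deriv f x * (y - x)) := by
  have hg1 : 0 < g1 := hg2.trans_le hg
  have ha : 1 < (2:ℝ) ^ R2min := one_lt_rpow one_lt_two hR2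
  have hqos : ∀ P2 : ℝ, (k * P2 + b) * g1 + P2 * g2
      = (2:ℝ) ^ R2min * P2 * g2 / ((2:ℝ) ^ R2min - 1) - σ2 := by
    rw [hk, hb]
    exact qos_power_identity ha.ne' hg1.ne'
  set c := (2:ℝ) ^ R2min * g2 / (((2:ℝ) ^ R2min - 1) * σ2)
  have hc0 : 0 < c := div_pos (by positivity) (mul_pos (sub_pos.mpr ha) hσ)
  have hcP : ∀ P2, (2:ℝ) ^ R2min * P2 * g2 / (((2:ℝ) ^ R2min - 1) * σ2) = c * P2 := by
    intro P2
    ring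
  have hf' : f = fun P2 => logb 2 (c * P2) / ((k + 1) * P2 + (Pf + b)) := by
    have hσ' : σ2 ≠ 0 := hσ.ne'
    have hE : (2:ℝ) ^ R2min - 1 ≠ 0 := (sub_pos.mpr ha).ne'
    rw [hf]
    funext P2
    rw [hqos, ← hcP]
    congr 1
    · congr 1
      field_simp
      ring
    · ring
  refine ⟨hqos, fun P2 _ => ?_, ?_⟩
  · rw [hf', hcP]
    ring_nf
  intro x hx y hy hxy hle
  rw [hDom, mem_ofPred_eq, hcP] at hx hy
  have hx0 : 0 < x := pos_of_mul_pos_right (one_pos.trans hx.1) hc0.le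
  have hy0 : 0 < y := pos_of_mul_pos_right (one_pos.trans hy.1) hc0.le
  rw [hf'] at hle ⊢
  exact (strictConcaveOn_logb_const_mul one_lt_two hc0).pseudoconcave_div_affine hx0 hy0 hxy
    (by unfold logb; fun_prop (disch := positivity)) (by linarith [hx.2]) (by linarith [hy.2]) hle

theorem reversed_sic_single_variable (g1 g2 σ2 Pf R2min k b : ℝ)
    (hg : g2 ≤ g1) (hg2 : 0 < g2) (hσ : 0 < σ2) (hPf : 0 < Pf) (hR2 : 0 < R2min)
    (hk : k = g2 / (((2:ℝ) ^ R2min - 1) * g1))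
    (hb : b = -σ2 / g1)
    (f : ℝ → ℝ)
    (hf : f = fun P2 => Real.logb 2 (1 + ((k * P2 + b) * g1 + P2 * g2) / σ2)
      / (Pf + k * P2 + P2 + b))
    (Dom : Set ℝ)
    (hDom : Dom = {P2 : ℝ |
      1 < (2:ℝ) ^ R2min * P2 * g2 / (((2:ℝ) ^ R2min - 1) * σ2) ∧
      0 < Pf + k * P2 + P2 + b}) :
    (∀ P2 : ℝ, (k * P2 + b) * g1 + P2 * g2
        = (2:ℝ) ^ R2min * P2 * g2 / ((2:ℝ) ^ R2min - 1) - σ2) ∧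
    (∀ P2 ∈ Dom, f P2 =
      Real.logb 2 ((2:ℝ) ^ R2min * P2 * g2 / (((2:ℝ) ^ R2min - 1) * σ2))
        / (Pf + (k + 1) * P2 + b)) ∧
    (∀ x ∈ Dom, ∀ y ∈ Dom, x ≠ y → f x ≤ f y → 0 < deriv f x * (y - x)) :=
  reversed_sic_single_variable_general g1 g2 σ2 Pf R2min k b hg hg2 hσ hR2 hk hb f hf Dom hDom
end

section
/- Monotone saturation of optimal transmit power: with all other powers fixed at their minimum values P_{-1}^min and g_1 the largest gain, the root P_1^† of ∂η/∂P_1 = 0 (where η(P_1) = log₂(1 + (P_1 g_1 + C)/σ²)/(P_f + P_1 + D) with C = Σ_{l>1} P_l^min g_l, D = Σ_{l>1} P_l^min) exists and is unique on (0,∞) whenever ∂η/∂P_1(0) > 0, η is strictly increasing on [0, P_1^†] and strictly decreasing on [P_1^†, ∞), and lim_{P_1→∞} η(P_1) = 0. -/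
/-!
Write `η = L / (b + t)` with `L` a base-2 logarithm of an increasing affine function, so `L` is
strictly concave. The numerator `L' t * (b + t) - L t` of `η'` is then strictly decreasing: by the
mean value theorem its increments are those of `L'` weighted by `b + t`. Hence `η'` changes sign
at most once, and only from `+` to `-`. It does change sign: otherwise `η` would increase strictly
from `η 0 ≥ 0`, contradicting `η → 0` (a logarithm grows slower than any linear function). The
zero of `η'` then comes from Darboux's theorem.
-/

open Set Filter Topology

section SingleCrossing

variable {f f' : ℝ → ℝ}

theorem exists_deriv_neg_of_tendsto_zero (hf : ∀ t, 0 ≤ t → HasDerivAt f (f' t) t)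
    (hcross : ∀ s t, 0 ≤ s → s < t → 0 ≤ f' t → 0 < f' s)
    (hf0 : 0 ≤ f 0) (hlim : Tendsto f atTop (𝓝 0)) : ∃ T, 0 < T ∧ f' T < 0 := by
  by_contra! hnonneg
  have hpos : ∀ t, 0 ≤ t → 0 < f' t := fun t ht =>
    hcross t (t + 1) ht (by linarith) (hnonneg _ (by linarith))
  have hmono : StrictMonoOn f (Ici 0) :=
    strictMonoOn_of_deriv_pos (convex_Ici 0)
      (fun t ht => (hf t ht).continuousAt.continuousWithinAt)
      (fun t ht => by
        rw [interior_Ici] at ht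
        exact (hf t ht.le).deriv ▸ hpos t ht.le)
  have h01 : f 0 < f 1 := hmono (mem_Ici.2 le_rfl) (mem_Ici.2 zero_le_one) zero_lt_one
  obtain ⟨t, hft, ht⟩ :=
    ((hlim.eventually (gt_mem_nhds (hf0.trans_lt h01))).and (eventually_ge_atTop 1)).exists
  exact hft.not_ge (hmono.monotoneOn (mem_Ici.2 zero_le_one) (mem_Ici.2 (by linarith)) ht)

theorem exists_deriv_eq_zero_strictMonoOn_Icc_strictAntiOn_Ici
    (hf : ∀ t, 0 ≤ t → HasDerivAt f (f' t) t)
    (hcross : ∀ s t, 0 ≤ s → s < t → 0 ≤ f' t → 0 < f' s)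
    (h0 : 0 < f' 0) (hf0 : 0 ≤ f 0) (hlim : Tendsto f atTop (𝓝 0)) :
    ∃ t₀, 0 < t₀ ∧ f' t₀ = 0 ∧ (∀ t, 0 < t → f' t = 0 → t = t₀) ∧
      StrictMonoOn f (Icc 0 t₀) ∧ StrictAntiOn f (Ici t₀) := by
  obtain ⟨T, hT, hfT⟩ := exists_deriv_neg_of_tendsto_zero hf hcross hf0 hlim
  obtain ⟨t₀, ⟨ht₀, -⟩, hroot⟩ := exists_hasDerivWithinAt_eq_of_lt_of_gt hT.le
    (fun t ht => (hf t ht.1).hasDerivWithinAt) h0 hfT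
  have hcont : ∀ {s : Set ℝ} t, 0 ≤ t → ContinuousWithinAt f s t := fun t ht =>
    (hf t ht).continuousAt.continuousWithinAt
  refine ⟨t₀, ht₀, hroot, fun t ht hft => ?_, ?_, ?_⟩
  · rcases lt_trichotomy t t₀ with h | h | h
    · exact absurd hft (hcross t t₀ ht.le h hroot.ge).ne'
    · exact h
    · exact absurd hroot (hcross t₀ t ht₀.le h hft.ge).ne'
  · refine strictMonoOn_of_deriv_pos (convex_Icc 0 t₀) (fun t ht => hcont t ht.1) fun t ht => ?_
    rw [interior_Icc] at ht
    rw [(hf t ht.1.le).deriv]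
    exact hcross t t₀ ht.1.le ht.2 hroot.ge
  · refine strictAntiOn_of_deriv_neg (convex_Ici t₀) (fun t ht => hcont t (ht₀.le.trans ht))
      fun t ht => ?_
    rw [interior_Ici] at ht
    rw [(hf t (ht₀.le.trans ht.le)).deriv]
    by_contra! hft
    exact (hcross t₀ t ht₀.le ht hft).ne' hroot

end SingleCrossing

section PseudoConcave

variable {L L' : ℝ → ℝ} {S : Set ℝ} {b : ℝ}

theorem strictAntiOn_deriv_mul_const_add_sub (hS : Convex ℝ S)
    (hL : ∀ t ∈ S, HasDerivAt L (L' t) t) (hL' : StrictAntiOn L' S) (hb : ∀ t ∈ S, 0 < b + t) :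
    StrictAntiOn (fun t => L' t * (b + t) - L t) S := by
  intro s hs t ht hst
  have hsub : Icc s t ⊆ S := hS.ordConnected.out hs ht
  obtain ⟨ξ, hξ, hslope⟩ := exists_hasDerivAt_eq_slope L L' hst
    (fun x hx => (hL x (hsub hx)).continuousAt.continuousWithinAt)
    (fun x hx => hL x (hsub (Ioo_subset_Icc_self hx)))
  have hchord : L' t * (t - s) < L t - L s := by
    have hξt : L' t < L' ξ := hL' (hsub (Ioo_subset_Icc_self hξ)) ht hξ.2
    rwa [hslope, lt_div_iff₀ (sub_pos.2 hst)] at hξt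
  have hLs : L' t * (b + s) < L' s * (b + s) := mul_lt_mul_of_pos_right (hL' hs ht hst) (hb s hs)
  show L' t * (b + t) - L t < L' s * (b + s) - L s
  linarith

theorem hasDerivAt_div_const_add {l t : ℝ} (hL : HasDerivAt L l t) (ht : b + t ≠ 0) :
    HasDerivAt (fun t => L t / (b + t)) ((l * (b + t) - L t) / (b + t) ^ 2) t := by
  simpa only [mul_one] using hL.fun_div ((hasDerivAt_id' t).const_add b) ht

theorem deriv_div_const_add_pos_of_lt_of_nonneg (hS : Convex ℝ S)
    (hL : ∀ t ∈ S, HasDerivAt L (L' t) t) (hL' : StrictAntiOn L' S) (hb : ∀ t ∈ S, 0 < b + t)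
    {s t : ℝ} (hs : s ∈ S) (ht : t ∈ S) (hst : s < t)
    (hnonneg : 0 ≤ (L' t * (b + t) - L t) / (b + t) ^ 2) :
    0 < (L' s * (b + s) - L s) / (b + s) ^ 2 := by
  have hφt : 0 ≤ L' t * (b + t) - L t := by
    simpa using (le_div_iff₀ (pow_pos (hb t ht) 2)).1 hnonneg
  have hφ := strictAntiOn_deriv_mul_const_add_sub hS hL hL' hb hs ht hst
  exact div_pos (hφt.trans_lt hφ) (pow_pos (hb s hs) 2)

end PseudoConcave

theorem Real.tendsto_log_mul_add_div_mul_add_atTop {a b c d : ℝ} (ha : 0 < a) (hc : 0 < c) :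
    Tendsto (fun t => Real.log (a * t + b) / (c * t + d)) atTop (𝓝 0) := by
  have hlin : Tendsto (fun t => a * t + b) atTop atTop :=
    tendsto_atTop_add_const_right _ b (tendsto_id.const_mul_atTop ha)
  refine ((Real.tendsto_pow_log_div_mul_add_atTop (c / a) (d - c * b / a) 1
    (div_pos hc ha).ne').comp hlin).congr fun t => ?_
  simp only [Function.comp_apply, pow_one]
  congr 1
  field_simp
  ring

theorem tendsto_logb_one_add_div_div_atTop {c g C σ2 Pf D : ℝ} (hg : 0 < g) (hσ : 0 < σ2) :
    Tendsto (fun t => Real.logb c (1 + (t * g + C) / σ2) / (Pf + t + D)) atTop (𝓝 0) := by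
  have := (Real.tendsto_log_mul_add_div_mul_add_atTop (b := 1 + C / σ2) (d := Pf + D)
    (div_pos hg hσ) one_pos).div_const (Real.log c)
  rw [zero_div] at this
  refine this.congr fun t => ?_
  have harg : g / σ2 * t + (1 + C / σ2) = 1 + (t * g + C) / σ2 := by ring
  have hden : 1 * t + (Pf + D) = Pf + t + D := by ring
  rw [harg, hden, div_right_comm]
  rfl

theorem Real.hasDerivAt_logb_one_add_div {c g C σ2 t : ℝ} (hσ : σ2 ≠ 0)
    (ht : σ2 + t * g + C ≠ 0) :
    HasDerivAt (fun t => Real.logb c (1 + (t * g + C) / σ2))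
      (g / (Real.log c * (σ2 + t * g + C))) t := by
  have hw : HasDerivAt (fun t => 1 + (t * g + C) / σ2) (g / σ2) t := by
    simpa using (((hasDerivAt_id' t).mul_const g).add_const C).div_const σ2 |>.const_add 1
  have hw0 : 1 + (t * g + C) / σ2 ≠ 0 := by
    rwa [one_add_div hσ, div_ne_zero_iff, ← add_assoc, and_iff_left hσ]
  refine ((hw.log hw0).div_const (Real.log c)).congr_deriv ?_
  rw [one_add_div hσ, ← add_assoc]
  field_simp

theorem strictAntiOn_Ici_div_log_mul {c g C σ2 : ℝ} (hc : 1 < c) (hg : 0 < g)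
    (hσC : 0 < σ2 + C) :
    StrictAntiOn (fun t => g / (Real.log c * (σ2 + t * g + C))) (Ici 0) := by
  intro s hs t _ hst
  have hlog := Real.log_pos hc
  have hs' : 0 < σ2 + s * g + C := by nlinarith [mul_nonneg (mem_Ici.1 hs) hg.le]
  refine div_lt_div_of_pos_left hg (by positivity) ?_
  gcongr

theorem single_variable_ee_unimodal (g C D σ2 Pf : ℝ)
    (hg : 0 < g) (hC : 0 ≤ C) (hD : 0 ≤ D) (hσ : 0 < σ2) (hPf : 0 < Pf)
    (η dη : ℝ → ℝ)
    (hη : η = fun t => Real.logb 2 (1 + (t * g + C) / σ2) / (Pf + t + D))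
    (hdη : dη = fun t => g / (Real.log 2 * (σ2 + t * g + C) * (Pf + t + D))
      - Real.logb 2 (1 + (t * g + C) / σ2) / (Pf + t + D) ^ 2)
    (h0 : 0 < dη 0) :
    ∃ tstar : ℝ, 0 < tstar ∧ dη tstar = 0 ∧
      (∀ t : ℝ, 0 < t → dη t = 0 → t = tstar) ∧
      StrictMonoOn η (Set.Icc 0 tstar) ∧
      StrictAntiOn η (Set.Ici tstar) ∧
      Filter.Tendsto η Filter.atTop (nhds 0) := by
  set L := fun t => Real.logb 2 (1 + (t * g + C) / σ2)
  set L' := fun t => g / (Real.log 2 * (σ2 + t * g + C))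
  have hrate : ∀ t ∈ Ici (0 : ℝ), 0 < σ2 + t * g + C := fun t ht => by
    nlinarith [mul_nonneg (mem_Ici.1 ht) hg.le]
  have hb : ∀ t ∈ Ici (0 : ℝ), 0 < Pf + D + t := fun t ht => by linarith [mem_Ici.1 ht]
  have hL : ∀ t ∈ Ici (0 : ℝ), HasDerivAt L (L' t) t := fun t ht =>
    Real.hasDerivAt_logb_one_add_div hσ.ne' (hrate t ht).ne'
  have hL' : StrictAntiOn L' (Ici 0) := strictAntiOn_Ici_div_log_mul one_lt_two hg (by linarith)
  have hdηL : ∀ t ∈ Ici (0 : ℝ), dη t = (L' t * (Pf + D + t) - L t) / (Pf + D + t) ^ 2 := by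
    intro t ht
    have := (hrate t ht).ne'
    have := (hb t ht).ne'
    simp only [hdη, L, L', add_right_comm Pf t D]
    field_simp
  have hderiv : ∀ t, 0 ≤ t → HasDerivAt η (dη t) t := fun t ht => by
    have hηL : η = fun t => L t / (Pf + D + t) := by
      rw [hη]; funext t; rw [add_right_comm]
    rw [hηL, hdηL t ht]
    exact hasDerivAt_div_const_add (hL t ht) (hb t ht).ne'
  have hcross : ∀ s t, 0 ≤ s → s < t → 0 ≤ dη t → 0 < dη s := fun s t hs hst hdt => by
    have ht : t ∈ Ici (0 : ℝ) := hs.trans hst.le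
    rw [hdηL t ht] at hdt
    rw [hdηL s hs]
    exact deriv_div_const_add_pos_of_lt_of_nonneg (convex_Ici 0) hL hL' hb hs ht hst hdt
  have hη0 : 0 ≤ η 0 := by
    rw [hη]
    refine div_nonneg (Real.logb_nonneg one_lt_two ?_) (by linarith)
    simp only [zero_mul, zero_add, le_add_iff_nonneg_right]
    positivity
  have hlim : Tendsto η atTop (𝓝 0) := hη ▸ tendsto_logb_one_add_div_div_atTop hg hσ
  obtain ⟨tstar, htstar, hroot, huniq, hmono, hanti⟩ :=
    exists_deriv_eq_zero_strictMonoOn_Icc_strictAntiOn_Ici hderiv hcross h0 hη0 hlim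
  exact ⟨tstar, htstar, hroot, huniq, hmono, hanti, hlim⟩
end
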